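/- arXiv:2511.17521 — 2 statements merged into one kernel-verified Lean document; each statement's English description precedes it below -/
import Mathlib

section
/- Let R and S be idempotent rings with S a two-sided ideal of R. If there exists a ring T containing both R and S as subrings such that T = TST, R = RTR, then R = S. -/
open Pointwise

/-- The additive subgroup generated by products `a * b`. -/
def mulSpan {R : Type*} [NonUnitalRing R] (A B : Set R) : AddSubgroup R :=
  AddSubgroup.closure (A * B)

/-- The additive subgroup generated by products `a * b * c`. -/
def tripleSpan {R : Type*} [NonUnitalRing R] (A B C : Set R) : AddSubgroup R :=
  AddSubgroup.closure (A * B * C)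

/-- Let `R` and `S` be idempotent rings with `S` a two-sided ideal of `R`. If there is a
ring `T` containing both `R` and `S` as subrings such that `T = TST` and `R = RTR`,
then `R = S`. -/
theorem stmt_1 {T : Type*} [NonUnitalRing T] (R S : NonUnitalSubring T)
    (hSR : S ≤ R)
    (hIdealL : ∀ r ∈ R, ∀ s ∈ S, r * s ∈ S)
    (hIdealR : ∀ r ∈ R, ∀ s ∈ S, s * r ∈ S)
    (hRIdem : mulSpan (R : Set T) (R : Set T) = R.toAddSubgroup)
    (hSIdem : mulSpan (S : Set T) (S : Set T) = S.toAddSubgroup)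
    (hTST : tripleSpan (Set.univ : Set T) (S : Set T) (Set.univ : Set T) = ⊤)
    (hRTR : tripleSpan (R : Set T) (Set.univ : Set T) (R : Set T) = R.toAddSubgroup) :
    R = S := by
  -- (1) products R·T·R land in R
  have hR3 : ∀ r ∈ R, ∀ t : T, ∀ r' ∈ R, r * t * r' ∈ R := by
    intro r hr t r' hr'
    have : r * t * r' ∈ tripleSpan (R : Set T) (Set.univ : Set T) (R : Set T) :=
      AddSubgroup.subset_closure
        (Set.mul_mem_mul (Set.mul_mem_mul hr (Set.mem_univ t)) hr')
    rwa [hRTR] at this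
  -- (2) R·T·S ⊆ S
  have hRTS : ∀ r ∈ R, ∀ t : T, ∀ s ∈ S, r * t * s ∈ S := by
    intro r hr t s hs
    have hs' : s ∈ AddSubgroup.closure ((S : Set T) * (S : Set T)) := by
      show s ∈ mulSpan (S : Set T) (S : Set T); rw [hSIdem]; exact hs
    have key : ∀ x ∈ AddSubgroup.closure ((S : Set T) * (S : Set T)), r * t * x ∈ S := by
      intro x hx
      induction hx using AddSubgroup.closure_induction with
      | mem y hy =>
        obtain ⟨a, ha, b, hb, rfl⟩ := hy
        have h1 : r * t * a ∈ R := hR3 r hr t a (hSR ha)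
        have : r * t * (a * b) = (r * t * a) * b := by noncomm_ring
        rw [this]
        exact hIdealL _ h1 _ hb
      | zero => simpa using S.zero_mem
      | add y z _ _ hy hz => rw [mul_add]; exact S.add_mem hy hz
      | neg y _ hy => rw [mul_neg]; exact S.neg_mem hy
    exact key s hs'
  -- (2') S·T·R ⊆ S
  have hSTR : ∀ s ∈ S, ∀ t : T, ∀ r ∈ R, s * t * r ∈ S := by
    intro s hs t r hr
    have hs' : s ∈ AddSubgroup.closure ((S : Set T) * (S : Set T)) := by
      show s ∈ mulSpan (S : Set T) (S : Set T); rw [hSIdem]; exact hs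
    have key : ∀ x ∈ AddSubgroup.closure ((S : Set T) * (S : Set T)), x * t * r ∈ S := by
      intro x hx
      induction hx using AddSubgroup.closure_induction with
      | mem y hy =>
        obtain ⟨a, ha, b, hb, rfl⟩ := hy
        have h1 : b * t * r ∈ R := hR3 b (hSR hb) t r hr
        have : (a * b) * t * r = a * (b * t * r) := by noncomm_ring
        rw [this]
        exact hIdealR _ h1 _ ha
      | zero => simp [S.zero_mem]
      | add y z _ _ hy hz => rw [add_mul, add_mul]; exact S.add_mem hy hz
      | neg y _ hy => rw [neg_mul, neg_mul]; exact S.neg_mem hy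
    exact key s hs'
  -- (3) R·T·S·T·R ⊆ S via splitting s, hence R ⊆ S
  have hRTSTR : ∀ r ∈ R, ∀ u : T, ∀ s ∈ S, ∀ v : T, ∀ r' ∈ R,
      r * (u * s * v) * r' ∈ S := by
    intro r hr u s hs v r' hr'
    have hs' : s ∈ AddSubgroup.closure ((S : Set T) * (S : Set T)) := by
      show s ∈ mulSpan (S : Set T) (S : Set T); rw [hSIdem]; exact hs
    have key : ∀ x ∈ AddSubgroup.closure ((S : Set T) * (S : Set T)),
        r * (u * x * v) * r' ∈ S := by
      intro x hx
      induction hx using AddSubgroup.closure_induction with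
      | mem y hy =>
        obtain ⟨a, ha, b, hb, rfl⟩ := hy
        have h1 : r * u * a ∈ S := hRTS r hr u a ha
        have h2 : b * v * r' ∈ S := hSTR b hb v r' hr'
        have : r * (u * (a * b) * v) * r' = (r * u * a) * (b * v * r') := by noncomm_ring
        rw [this]
        exact S.mul_mem h1 h2
      | zero => simp [S.zero_mem]
      | add y z _ _ hy hz =>
        have : r * (u * (y + z) * v) * r' = r * (u * y * v) * r' + r * (u * z * v) * r' := by
          noncomm_ring
        rw [this]; exact S.add_mem hy hz
      | neg y _ hy =>
        have : r * (u * (-y) * v) * r' = -(r * (u * y * v) * r') := by noncomm_ring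
        rw [this]; exact S.neg_mem hy
    exact key s hs'
  -- R·T·R ⊆ S
  have hRtoS : ∀ r ∈ R, ∀ t : T, ∀ r' ∈ R, r * t * r' ∈ S := by
    intro r hr t r' hr'
    have ht : t ∈ AddSubgroup.closure ((Set.univ : Set T) * (S : Set T) * (Set.univ : Set T)) := by
      show t ∈ tripleSpan (Set.univ : Set T) (S : Set T) (Set.univ : Set T)
      rw [hTST]; trivial
    have key : ∀ x ∈ AddSubgroup.closure
        ((Set.univ : Set T) * (S : Set T) * (Set.univ : Set T)), r * x * r' ∈ S := by
      intro x hx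
      induction hx using AddSubgroup.closure_induction with
      | mem y hy =>
        obtain ⟨c, hc, v, -, rfl⟩ := hy
        obtain ⟨u, -, s, hs, rfl⟩ := hc
        exact hRTSTR r hr u s hs v r' hr'
      | zero => simp [S.zero_mem]
      | add y z _ _ hy hz =>
        have : r * (y + z) * r' = r * y * r' + r * z * r' := by noncomm_ring
        rw [this]; exact S.add_mem hy hz
      | neg y _ hy =>
        have : r * (-y) * r' = -(r * y * r') := by noncomm_ring
        rw [this]; exact S.neg_mem hy
    exact key t ht
  -- conclude
  refine le_antisymm ?_ hSR
  intro r hr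
  have : r ∈ R.toAddSubgroup := hr
  rw [← hRTR] at this
  have key : ∀ x ∈ AddSubgroup.closure ((R : Set T) * (Set.univ : Set T) * (R : Set T)),
      x ∈ S := by
    intro x hx
    induction hx using AddSubgroup.closure_induction with
    | mem y hy =>
      obtain ⟨c, hc, r', hr', rfl⟩ := hy
      obtain ⟨a, ha, t, -, rfl⟩ := hc
      exact hRtoS a ha t r' hr'
    | zero => exact S.zero_mem
    | add y z _ _ hy hz => exact S.add_mem hy hz
    | neg y _ hy => exact S.neg_mem hy
  exact key r this
end

section
/- If R is any ring and S is an idempotent subring of R with S ⊴ R (S an ideal), and T is a joint enlargement of R and S (T = TST, S = STS, T = TRT, R = RTR), then R = RSR. -/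
open Pointwise

section Aux

variable {T : Type*} [NonUnitalRing T]

/-- If `a ∈ closure A` and `b ∈ closure B` then `a * b ∈ closure (A * B)`. -/
lemma mem_closure_mul {A B : Set T} {a b : T} (ha : a ∈ AddSubgroup.closure A)
    (hb : b ∈ AddSubgroup.closure B) : a * b ∈ AddSubgroup.closure (A * B) := by
  induction ha using AddSubgroup.closure_induction with
  | mem x hx =>
    induction hb using AddSubgroup.closure_induction with
    | mem y hy => exact AddSubgroup.subset_closure (Set.mul_mem_mul hx hy)
    | zero => simpa using (AddSubgroup.closure (A * B)).zero_mem
    | add y z _ _ hy hz => simpa [mul_add] using add_mem hy hz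
    | neg y _ hy => simpa [mul_neg] using neg_mem hy
  | zero => simpa using (AddSubgroup.closure (A * B)).zero_mem
  | add x y _ _ hx hy => simpa [add_mul] using add_mem hx hy
  | neg x _ hx => simpa [neg_mul] using neg_mem hx

lemma mul_subset_closure {A B A' B' : Set T} (hA : A ⊆ (AddSubgroup.closure A' : Set T))
    (hB : B ⊆ (AddSubgroup.closure B' : Set T)) :
    A * B ⊆ (AddSubgroup.closure (A' * B') : Set T) := by
  rintro _ ⟨a, ha, b, hb, rfl⟩
  exact mem_closure_mul (hA ha) (hB hb)

lemma closure_triple_le {A B C A' B' C' : Set T}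
    (hA : A ⊆ (AddSubgroup.closure A' : Set T))
    (hB : B ⊆ (AddSubgroup.closure B' : Set T))
    (hC : C ⊆ (AddSubgroup.closure C' : Set T)) :
    AddSubgroup.closure (A * B * C) ≤ AddSubgroup.closure (A' * B' * C') :=
  (AddSubgroup.closure_le _).2 (mul_subset_closure (mul_subset_closure hA hB) hC)

end Aux

/-- If `R` is any ring, `S` is an idempotent subring of `R` with `S ⊴ R`, and `T` is a
joint enlargement of `R` and `S` (i.e. `T = TST`, `S = STS`, `T = TRT`, `R = RTR`),
then `R = RSR`. -/
theorem stmt_2 {T : Type*} [NonUnitalRing T] (R S : NonUnitalSubring T)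
    (hSR : S ≤ R)
    (hIdealL : ∀ r ∈ R, ∀ s ∈ S, r * s ∈ S)
    (hIdealR : ∀ r ∈ R, ∀ s ∈ S, s * r ∈ S)
    (hSIdem : mulSpan (S : Set T) (S : Set T) = S.toAddSubgroup)
    (hTST : tripleSpan (Set.univ : Set T) (S : Set T) (Set.univ : Set T) = ⊤)
    (hSTS : tripleSpan (S : Set T) (Set.univ : Set T) (S : Set T) = S.toAddSubgroup)
    (hTRT : tripleSpan (Set.univ : Set T) (R : Set T) (Set.univ : Set T) = ⊤)
    (hRTR : tripleSpan (R : Set T) (Set.univ : Set T) (R : Set T) = R.toAddSubgroup) :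
    R.toAddSubgroup = tripleSpan (R : Set T) (S : Set T) (R : Set T) := by
  simp only [mulSpan, tripleSpan] at *
  set U : Set T := Set.univ with hU
  -- S ⊆ closure (S*S*S)
  have hS3 : (S : Set T) ⊆ (AddSubgroup.closure ((S : Set T) * (S : Set T) * (S : Set T)) : Set T) := by
    intro s hs
    have hs' : s ∈ AddSubgroup.closure ((S : Set T) * (S : Set T)) := by rw [hSIdem]; exact hs
    refine (AddSubgroup.closure_le _).2 ?_ hs'
    rintro _ ⟨a, ha, b, hb, rfl⟩
    have ha' : a ∈ AddSubgroup.closure ((S : Set T) * (S : Set T)) := by rw [hSIdem]; exact ha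
    exact mem_closure_mul ha' (AddSubgroup.subset_closure hb)
  -- S ⊆ closure (R*S*R)
  have hSsub : (S : Set T) ⊆ (AddSubgroup.closure ((R : Set T) * (S : Set T) * (R : Set T)) : Set T) := by
    intro s hs
    exact AddSubgroup.closure_mono
      (Set.mul_subset_mul (Set.mul_subset_mul_right hSR) hSR) (hS3 hs)
  apply le_antisymm
  · -- R ≤ closure (R*S*R)
    rw [← hRTR]
    have step1 : AddSubgroup.closure ((R : Set T) * U * (R : Set T)) ≤
        AddSubgroup.closure ((R : Set T) * (U * (S : Set T) * U) * (R : Set T)) := by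
      refine closure_triple_le AddSubgroup.subset_closure ?_ AddSubgroup.subset_closure
      intro t _
      rw [hTST]; trivial
    have hassoc1 : (R : Set T) * (U * (S : Set T) * U) * (R : Set T) = (R : Set T) * U * (S : Set T) * (U * (R : Set T)) := by
      simp only [mul_assoc]
    have step2 : AddSubgroup.closure ((R : Set T) * U * (S : Set T) * (U * (R : Set T))) ≤
        AddSubgroup.closure (((R : Set T) * U) * ((R : Set T) * (S : Set T) * (R : Set T)) * (U * (R : Set T))) :=
      closure_triple_le AddSubgroup.subset_closure hSsub AddSubgroup.subset_closure
    have hassoc2 : ((R : Set T) * U) * ((R : Set T) * (S : Set T) * (R : Set T)) * (U * (R : Set T)) =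
        ((R : Set T) * U * (R : Set T)) * (S : Set T) * ((R : Set T) * (U * (R : Set T))) := by
      simp only [mul_assoc]
    have hRUR : ((R : Set T) * U * (R : Set T)) ⊆ (AddSubgroup.closure (R : Set T) : Set T) := by
      intro x hx
      have : x ∈ AddSubgroup.closure ((R : Set T) * U * (R : Set T)) := AddSubgroup.subset_closure hx
      rw [hRTR] at this
      exact AddSubgroup.subset_closure this
    have hRUR' : ((R : Set T) * (U * (R : Set T))) ⊆ (AddSubgroup.closure (R : Set T) : Set T) := by
      rw [← mul_assoc]; exact hRUR
    have step3 : AddSubgroup.closure (((R : Set T) * U * (R : Set T)) * (S : Set T) * ((R : Set T) * (U * (R : Set T)))) ≤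
        AddSubgroup.closure ((R : Set T) * (S : Set T) * (R : Set T)) := by
      have := closure_triple_le (B := (S : Set T)) (B' := (S : Set T)) hRUR AddSubgroup.subset_closure hRUR'
      refine this.trans (le_of_eq ?_)
      congr 1
    calc AddSubgroup.closure ((R : Set T) * U * (R : Set T))
        ≤ AddSubgroup.closure ((R : Set T) * (U * (S : Set T) * U) * (R : Set T)) := step1
      _ = AddSubgroup.closure ((R : Set T) * U * (S : Set T) * (U * (R : Set T))) := by rw [hassoc1]
      _ ≤ AddSubgroup.closure (((R : Set T) * U) * ((R : Set T) * (S : Set T) * (R : Set T)) * (U * (R : Set T))) := step2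
      _ = AddSubgroup.closure (((R : Set T) * U * (R : Set T)) * (S : Set T) * ((R : Set T) * (U * (R : Set T)))) := by
          rw [hassoc2]
      _ ≤ AddSubgroup.closure ((R : Set T) * (S : Set T) * (R : Set T)) := step3
  · -- closure (R*S*R) ≤ R
    refine (AddSubgroup.closure_le _).2 ?_
    rintro _ ⟨_, ⟨a, ha, b, hb, rfl⟩, c, hc, rfl⟩
    show a * b * c ∈ R.toAddSubgroup
    exact R.mul_mem (R.mul_mem ha (hSR hb)) hc
end
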